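/- Let G be a connected bipartite graph with bipartition (X,Y), and n ≥ 3 an odd integer. If |X| ≥ δ(G)+1, |Y| ≥ δ(G)+1, and κ(G) > (2/n)·δ(G), then G × C_n is super connected. -/

import Mathlib

open SimpleGraph

universe u v

variable {α : Type u} {β : Type v}

/-- Direct (tensor) product of two simple graphs. -/
def SimpleGraph.tensorProd (G : SimpleGraph α) (H : SimpleGraph β) :
    SimpleGraph (α × β) where
  Adj x y := G.Adj x.1 y.1 ∧ H.Adj x.2 y.2
  symm := ⟨fun x y h => ⟨h.1.symm, h.2.symm⟩⟩
  loopless := ⟨fun x h => G.irrefl h.1⟩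

/-- Direct (tensor) product of a family of simple graphs. -/
def SimpleGraph.piTensorProd {ι : Type*} {V : ι → Type*}
    (G : ∀ i, SimpleGraph (V i)) : SimpleGraph (∀ i, V i) where
  Adj f g := f ≠ g ∧ ∀ i, (G i).Adj (f i) (g i)
  symm := ⟨fun f g h => ⟨h.1.symm, fun i => (h.2 i).symm⟩⟩
  loopless := ⟨fun f h => h.1 rfl⟩

/-- `S` is a vertex cut of `G`: deleting `S` leaves a disconnected graph. -/
def SimpleGraph.IsVertexCut (G : SimpleGraph α) (S : Set α) : Prop :=
  ¬ (G.induce Sᶜ).Connected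

/-- Vertex connectivity: minimum size of a set `S` such that `G - S` is
disconnected or has at most one vertex. -/
noncomputable def SimpleGraph.vConn (G : SimpleGraph α) : ℕ :=
  sInf {n | ∃ S : Set α, S.ncard = n ∧
    (G.IsVertexCut S ∨ Nat.card α ≤ n + 1)}

/-- Minimum degree (via neighbor set cardinalities). -/
noncomputable def SimpleGraph.minDeg (G : SimpleGraph α) : ℕ :=
  sInf {d | ∃ v, (G.neighborSet v).ncard = d}

/-- A minimum vertex cut. -/
def SimpleGraph.IsMinVertexCut (G : SimpleGraph α) (S : Set α) : Prop :=
  G.IsVertexCut S ∧ S.ncard = G.vConn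

/-- `G` is super connected: every minimum vertex cut is the neighborhood of a
vertex of minimum degree. -/
def SimpleGraph.SuperConnected (G : SimpleGraph α) : Prop :=
  ∀ S : Set α, G.IsMinVertexCut S →
    ∃ v, (G.neighborSet v).ncard = G.minDeg ∧ S = G.neighborSet v

/-- `(X, Y)` is a bipartition of `G`. -/
def SimpleGraph.IsBipartition (G : SimpleGraph α) (X Y : Set α) : Prop :=
  Disjoint X Y ∧ X ∪ Y = Set.univ ∧
    ∀ u v, G.Adj u v → (u ∈ X ∧ v ∈ Y) ∨ (u ∈ Y ∧ v ∈ X)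

/-- The graph `G̃ₙ`: vertex set `α × ZMod n`, with for each `i` a copy `Hᵢ`
of `G` on `(Xᵢ, Yᵢ)` and a copy `Hᵢ'` of `G` on `(Xᵢ₊₁, Yᵢ)`. -/
def tildeG (G : SimpleGraph α) (X Y : Set α) (n : ℕ) :
    SimpleGraph (α × ZMod n) where
  Adj a b := G.Adj a.1 b.1 ∧
    ((a.1 ∈ X ∧ b.1 ∈ Y ∧ (a.2 = b.2 ∨ a.2 = b.2 + 1)) ∨
     (a.1 ∈ Y ∧ b.1 ∈ X ∧ (b.2 = a.2 ∨ b.2 = a.2 + 1)))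
  symm := ⟨fun a b h => ⟨h.1.symm, by tauto⟩⟩
  loopless := ⟨fun a h => G.irrefl h.1⟩

/-!
Split the vertices of `G × Cₙ` into the joints `X × {i}` and `Y × {i}`. Two consecutive joints span
a copy of `G`, and since `n` is odd the `2n` joints lie on a single cycle. A minimum cut `S` has at
most `2δ(G)` vertices, as the neighbourhood of a vertex is a cut. If two components of
`G × Cₙ - S` both met every copy, each of the `2n` copies would contain at least `κ(G)` vertices of
`S`, and counting would give `nκ(G) ≤ |S| ≤ 2δ(G)`. So some component `D` misses a copy. The
joint just beyond either end of a maximal run of joints met by `D` contains at least `δ(G)`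
neighbours of a vertex of `D`, all in `S`, so these two joints hold all of `S`, at most `δ(G)`
vertices each. If the run had two joints or more, the copy spanned by its top two would avoid `S`
and lie in `D`, and the joint above, which `D` does not meet, would lie inside `S`; but it has more
than `δ(G)` vertices. So the run is a single joint, and a vertex of `D` in it has all its
neighbours in `S`, which forces `S` to be its neighbourhood.
-/

open scoped Fin.CommRing

theorem Set.ncard_inter_preimage_eq_sum {γ ι : Type*} [Finite γ] [DecidableEq ι] (f : γ → ι)
    (S : Set γ) (I : Finset ι) :
    (S ∩ f ⁻¹' I).ncard = ∑ k ∈ I, (S ∩ f ⁻¹' {k}).ncard := by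
  induction I using Finset.induction_on with
  | empty => simp
  | insert a I ha ih =>
    rw [Finset.sum_insert ha, ← ih, Finset.coe_insert, Set.insert_eq, Set.preimage_union,
      Set.inter_union_distrib_left]
    refine Set.ncard_union_eq (Set.disjoint_left.2 fun p hpa hpI => ha ?_)
    exact (Set.mem_singleton_iff.1 hpa.2) ▸ hpI.2

theorem exists_mem_add_one_notMem {ι : Type*} [AddGroupWithOne ι]
    (hι : Function.Surjective (Nat.cast : ℕ → ι)) {L : Set ι} {a : ι} (ha : a ∈ L)
    (hL : L ≠ Set.univ) : ∃ c ∈ L, c + 1 ∉ L ∧ (c = a ∨ c - 1 ∈ L) := by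
  by_contra! h
  have hrun : ∀ t : ℕ, a + t ∈ L ∧ a + t + 1 ∈ L := by
    intro t
    induction t with
    | zero =>
      rw [Nat.cast_zero, add_zero]
      exact ⟨ha, by_contra fun h1 => (h a ha h1).1 rfl⟩
    | succ t ih =>
      rw [Nat.cast_succ, ← add_assoc]
      refine ⟨ih.2, by_contra fun h1 => (h _ ih.2 h1).2 ?_⟩
      rw [add_sub_cancel_right]
      exact ih.1
  refine hL (Set.eq_univ_of_forall fun k => ?_)
  obtain ⟨t, ht⟩ := hι (-a + k)
  simpa [ht] using (hrun t).1

theorem natCast_surjective_zmod_two_prod_fin {m : ℕ} (hodd : Odd (m + 3)) :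
    Function.Surjective (Nat.cast : ℕ → ZMod 2 × Fin (m + 3)) := by
  rintro ⟨e, x⟩
  by_cases h : (x.val : ZMod 2) = e
  · exact ⟨x.val, Prod.ext h (Fin.cast_val_eq_self x)⟩
  · have hflip : ∀ a b : ZMod 2, a ≠ b → a + 1 = b := by decide
    refine ⟨x.val + (m + 3), Prod.ext ?_ ?_⟩
    · change ((x.val + (m + 3) : ℕ) : ZMod 2) = e
      rw [Nat.cast_add, hodd.natCast_zmod_two]
      exact hflip _ _ h
    · change ((x.val + (m + 3) : ℕ) : Fin (m + 3)) = x
      rw [Nat.cast_add, Fin.natCast_self, add_zero, Fin.cast_val_eq_self]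

theorem add_one_ne_sub_one {m : ℕ} (c : ZMod 2 × Fin (m + 3)) : c + 1 ≠ c - 1 := by
  intro h
  have h2 : (1 + 1 : ZMod 2 × Fin (m + 3)).2 = 0 := by
    rw [← add_sub_sub_cancel c 1 1, h, sub_self]; rfl
  simp [Fin.ext_iff, Fin.val_add, Nat.mod_eq_of_lt (show 2 < m + 3 by omega)] at h2

namespace SimpleGraph

section Connectivity

variable {G : SimpleGraph α} {H : SimpleGraph β}

theorem vConn_le_ncard {S : Set α} (h : G.IsVertexCut S) : G.vConn ≤ S.ncard :=
  Nat.sInf_le ⟨S, rfl, Or.inl h⟩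

theorem connected_induce_compl_of_ncard_lt_vConn {S : Set α} (h : S.ncard < G.vConn) :
    (G.induce Sᶜ).Connected :=
  not_not.1 fun hS => (vConn_le_ncard hS).not_gt h

theorem minDeg_le_ncard_neighborSet (v : α) : G.minDeg ≤ (G.neighborSet v).ncard :=
  Nat.sInf_le ⟨v, rfl⟩

theorem exists_ncard_neighborSet_eq_minDeg [Nonempty α] :
    ∃ v, (G.neighborSet v).ncard = G.minDeg :=
  Nat.sInf_mem (s := {d | ∃ v, (G.neighborSet v).ncard = d}) ⟨_, Classical.arbitrary α, rfl⟩

theorem Connected.one_le_minDeg [Nontrivial α] [Finite α] (hG : G.Connected) :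
    1 ≤ G.minDeg := by
  obtain ⟨v, hv⟩ := G.exists_ncard_neighborSet_eq_minDeg
  obtain ⟨w, hw⟩ := hG.preconnected.exists_adj_of_nontrivial v
  rw [← hv, Nat.one_le_iff_ne_zero, Ne, Set.ncard_eq_zero]
  exact Set.nonempty_iff_ne_empty.1 ⟨w, hw⟩

theorem vConn_le_ncard_neighborSet [Finite α] (v : α) :
    G.vConn ≤ (G.neighborSet v).ncard := by
  by_cases hz : ∃ z, z ≠ v ∧ z ∉ G.neighborSet v
  · obtain ⟨z, hzv, hzN⟩ := hz
    refine vConn_le_ncard fun hconn => ?_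
    obtain ⟨w⟩ := hconn.preconnected ⟨v, G.notMem_neighborSet_self⟩ ⟨z, hzN⟩
    cases w with
    | nil => exact hzv rfl
    | @cons _ w _ h _ => exact w.2 h
  · push Not at hz
    refine Nat.sInf_le ⟨_, rfl, Or.inr ?_⟩
    rw [← Set.ncard_univ, ← Set.ncard_singleton v]
    refine (Set.ncard_le_ncard fun z _ => ?_).trans (Set.ncard_union_le _ _)
    by_cases h : z = v
    · exact Or.inr h
    · exact Or.inl (hz z h)

theorem IsVertexCut.exists_not_reachable [Finite α] {S : Set α} (h : G.IsVertexCut S)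
    (hS : S.ncard < Nat.card α) : ∃ x y : ↥Sᶜ, ¬ (G.induce Sᶜ).Reachable x y := by
  have : Nonempty ↥Sᶜ := (Set.nonempty_compl.2 fun hSu => by simp [hSu] at hS).to_subtype
  by_contra! hr
  exact h ⟨hr⟩

theorem Hom.reachable_induce_compl (f : G →g H) {S : Set β}
    (hS : (f ⁻¹' S).ncard < G.vConn) {u v : α} (hu : f u ∉ S) (hv : f v ∉ S) :
    (H.induce Sᶜ).Reachable ⟨f u, hu⟩ ⟨f v, hv⟩ :=
  ((connected_induce_compl_of_ncard_lt_vConn hS).preconnected ⟨u, hu⟩ ⟨v, hv⟩).map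
    (induceHom f fun _ hx => hx : G.induce (f ⁻¹' S)ᶜ →g H.induce Sᶜ)

end Connectivity

def componentOutside (G : SimpleGraph α) (S : Set α) (x : ↥Sᶜ) : Set α :=
  {q | ∃ hq : q ∉ S, (G.induce Sᶜ).Reachable x ⟨q, hq⟩}

section componentOutside

variable {G : SimpleGraph α} {S : Set α} {x : ↥Sᶜ}

theorem mem_componentOutside_self : ↑x ∈ G.componentOutside S x :=
  ⟨x.2, .rfl⟩

theorem mem_componentOutside_of_reachable {p q : α} (hp : p ∈ G.componentOutside S x)
    (hq : q ∉ S) (h : (G.induce Sᶜ).Reachable ⟨p, hp.1⟩ ⟨q, hq⟩) :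
    q ∈ G.componentOutside S x :=
  ⟨hq, hp.2.trans h⟩

theorem mem_componentOutside_of_adj {p q : α} (hp : p ∈ G.componentOutside S x)
    (hq : q ∉ S) (h : G.Adj p q) : q ∈ G.componentOutside S x :=
  mem_componentOutside_of_reachable hp hq (Adj.reachable (G := G.induce Sᶜ) h)

theorem Hom.mem_componentOutside {H : SimpleGraph β} (f : H →g G)
    (hS : (f ⁻¹' S).ncard < H.vConn) {u v : β}
    (hu : f u ∈ G.componentOutside S x) (hv : f v ∉ S) : f v ∈ G.componentOutside S x :=
  mem_componentOutside_of_reachable hu hv (f.reachable_induce_compl hS hu.1 hv)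

theorem reachable_of_mem_componentOutside {y : ↥Sᶜ} {q : α}
    (hx : q ∈ G.componentOutside S x) (hy : q ∈ G.componentOutside S y) :
    (G.induce Sᶜ).Reachable x y :=
  hx.2.trans hy.2.symm

end componentOutside

theorem neighborSet_tensorProd (G : SimpleGraph α) (H : SimpleGraph β) (p : α × β) :
    (G.tensorProd H).neighborSet p = G.neighborSet p.1 ×ˢ H.neighborSet p.2 :=
  rfl

theorem ncard_neighborSet_cycleGraph {m : ℕ} (i : Fin (m + 3)) :
    ((cycleGraph (m + 3)).neighborSet i).ncard = 2 := by
  rw [← Nat.card_coe_set_eq, Nat.card_eq_fintype_card, card_neighborSet_eq_degree,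
    cycleGraph_degree_three_le]

theorem ncard_neighborSet_tensorProd_cycleGraph {m : ℕ} (G : SimpleGraph α)
    (p : α × Fin (m + 3)) :
    ((G.tensorProd (cycleGraph (m + 3))).neighborSet p).ncard =
      2 * (G.neighborSet p.1).ncard := by
  rw [neighborSet_tensorProd, Set.ncard_prod, ncard_neighborSet_cycleGraph, mul_comm]

theorem minDeg_tensorProd_cycleGraph {m : ℕ} [Nonempty α] (G : SimpleGraph α) :
    (G.tensorProd (cycleGraph (m + 3))).minDeg = 2 * G.minDeg := by
  obtain ⟨v, hv⟩ := G.exists_ncard_neighborSet_eq_minDeg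
  obtain ⟨p, hp⟩ := (G.tensorProd (cycleGraph (m + 3))).exists_ncard_neighborSet_eq_minDeg
  refine le_antisymm ?_ ?_
  · simpa [ncard_neighborSet_tensorProd_cycleGraph, hv] using
      minDeg_le_ncard_neighborSet (G := G.tensorProd (cycleGraph (m + 3))) (v, 0)
  · rw [← hp, ncard_neighborSet_tensorProd_cycleGraph]
    exact Nat.mul_le_mul_left 2 (minDeg_le_ncard_neighborSet p.1)

theorem vConn_tensorProd_cycleGraph_le {m : ℕ} [Finite α] [Nonempty α] (G : SimpleGraph α) :
    (G.tensorProd (cycleGraph (m + 3))).vConn ≤ 2 * G.minDeg := by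
  obtain ⟨v, hv⟩ := G.exists_ncard_neighborSet_eq_minDeg
  have := vConn_le_ncard_neighborSet (G := G.tensorProd (cycleGraph (m + 3))) (v, 0)
  rwa [ncard_neighborSet_tensorProd_cycleGraph, hv] at this

section Bipartite

variable {G : SimpleGraph α} {X Y : Set α} {m : ℕ}

theorem IsBipartition.finite (hbip : G.IsBipartition X Y) (hX : X.ncard ≠ 0)
    (hY : Y.ncard ≠ 0) : Finite α := by
  rw [← Set.finite_univ_iff, ← hbip.2.1]
  exact (Set.finite_of_ncard_ne_zero hX).union (Set.finite_of_ncard_ne_zero hY)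

theorem IsBipartition.nontrivial (hbip : G.IsBipartition X Y) (hX : X.Nonempty)
    (hY : Y.Nonempty) : Nontrivial α :=
  ⟨hX.some, hY.some, fun h => Set.disjoint_left.1 hbip.1 hX.some_mem (h ▸ hY.some_mem)⟩

theorem IsBipartition.two_mul_minDeg_lt_card [Finite α] (hbip : G.IsBipartition X Y)
    (hX : G.minDeg + 1 ≤ X.ncard) (hY : G.minDeg + 1 ≤ Y.ncard) :
    2 * G.minDeg < Nat.card (α × Fin (m + 3)) := by
  have hα : X.ncard + Y.ncard = Nat.card α := by
    rw [← Set.ncard_union_eq hbip.1, hbip.2.1, Set.ncard_univ]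
  rw [Nat.card_prod, Nat.card_eq_fintype_card (α := Fin _), Fintype.card_fin]
  nlinarith

open Classical in
noncomputable def parity (X : Set α) (u : α) : ZMod 2 := if u ∈ X then 0 else 1

theorem parity_eq_zero_iff {u : α} : parity X u = 0 ↔ u ∈ X := by
  unfold parity; split_ifs with h <;> simp [h]

theorem IsBipartition.parity_eq_one_iff (hbip : G.IsBipartition X Y) {u : α} :
    parity X u = 1 ↔ u ∈ Y := by
  have hu : u ∈ X ∪ Y := hbip.2.1 ▸ Set.mem_univ u
  unfold parity
  split_ifs with h
  · simpa using Set.disjoint_left.1 hbip.1 h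
  · simpa [h] using hu

theorem IsBipartition.parity_of_adj (hbip : G.IsBipartition X Y) {u v : α} (h : G.Adj u v) :
    parity X v = parity X u + 1 := by
  rcases hbip.2.2 u v h with ⟨hu, hv⟩ | ⟨hu, hv⟩
  · rw [parity_eq_zero_iff.2 hu, hbip.parity_eq_one_iff.2 hv, zero_add]
  · rw [parity_eq_zero_iff.2 hv, hbip.parity_eq_one_iff.2 hu]; rfl

/- The joint `(0, i)` is `X × {i}` and the joint `(1, i)` is `Y × {i}`; `copyHom k` below is the
copy of `G` on the joints `k` and `k + 1`, where `1 = (1, 1)`. -/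
noncomputable def jointIndex (X : Set α) (p : α × Fin (m + 3)) : ZMod 2 × Fin (m + 3) :=
  (parity X p.1, p.2)

theorem IsBipartition.tensorProd_cycleGraph_adj_iff (hbip : G.IsBipartition X Y)
    {p q : α × Fin (m + 3)} :
    (G.tensorProd (cycleGraph (m + 3))).Adj p q ↔ G.Adj p.1 q.1 ∧
      (jointIndex X q = jointIndex X p + 1 ∨ jointIndex X q = jointIndex X p - 1) := by
  refine and_congr_right fun h => ?_
  have hsub : ∀ e : ZMod 2, e - 1 = e + 1 := by decide
  simp only [jointIndex, Prod.ext_iff, Prod.fst_add, Prod.snd_add, Prod.fst_sub, Prod.snd_sub,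
    Prod.fst_one, Prod.snd_one, hbip.parity_of_adj h, hsub, true_and]
  rw [cycleGraph_adj (n := m + 1), sub_eq_iff_eq_add', sub_eq_iff_eq_add', eq_sub_iff_add_eq,
    or_comm]
  exact or_congr_right eq_comm

theorem IsBipartition.adj_and_jointIndex_eq (hbip : G.IsBipartition X Y)
    {q : α × Fin (m + 3)} {v : α} (hv : G.Adj q.1 v) {k : ZMod 2 × Fin (m + 3)}
    (hk : k = jointIndex X q + 1 ∨ k = jointIndex X q - 1) :
    (G.tensorProd (cycleGraph (m + 3))).Adj q (v, k.2) ∧ jointIndex X (v, k.2) = k := by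
  have hsub : ∀ e : ZMod 2, e - 1 = e + 1 := by decide
  have hjoint : jointIndex X (v, k.2) = k := by
    refine Prod.ext ?_ rfl
    rcases hk with rfl | rfl <;> simp [jointIndex, hbip.parity_of_adj hv, hsub]
  exact ⟨hbip.tensorProd_cycleGraph_adj_iff.2 ⟨hv, hjoint ▸ hk⟩, hjoint⟩

theorem IsBipartition.minDeg_lt_ncard_joint [Finite α] (hbip : G.IsBipartition X Y)
    (hX : G.minDeg + 1 ≤ X.ncard) (hY : G.minDeg + 1 ≤ Y.ncard) (k : ZMod 2 × Fin (m + 3)) :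
    G.minDeg < (jointIndex X ⁻¹' {k}).ncard := by
  have hside : ∀ e : ZMod 2, e = 0 ∨ e = 1 := by decide
  have hle : ∀ Z : Set α, (∀ u ∈ Z, parity X u = k.1) →
      Z.ncard ≤ (jointIndex X ⁻¹' {k}).ncard := fun Z hZ =>
    Set.ncard_le_ncard_of_injOn (fun u => (u, k.2)) (fun u hu => Prod.ext (hZ u hu) rfl)
      fun _ _ _ _ h => congrArg Prod.fst h
  rcases hside k.1 with h | h
  · exact hX.trans (hle X fun u hu => h ▸ parity_eq_zero_iff.2 hu)
  · exact hY.trans (hle Y fun u hu => h ▸ hbip.parity_eq_one_iff.2 hu)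

theorem jointIndex_mk_ite (k : ZMod 2 × Fin (m + 3)) (u : α) :
    jointIndex X (u, if parity X u = k.1 then k.2 else k.2 + 1) =
      if parity X u = k.1 then k else k + 1 := by
  have hne : ∀ e e' : ZMod 2, e ≠ e' → e = e' + 1 := by decide
  split_ifs with h
  · exact Prod.ext h rfl
  · exact Prod.ext (hne _ _ h) rfl

noncomputable def IsBipartition.copyHom (hbip : G.IsBipartition X Y)
    (k : ZMod 2 × Fin (m + 3)) : G →g G.tensorProd (cycleGraph (m + 3)) where
  toFun u := (u, if parity X u = k.1 then k.2 else k.2 + 1)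
  map_rel' {u v} h := by
    refine hbip.tensorProd_cycleGraph_adj_iff.2 ⟨h, ?_⟩
    have hflip : ∀ a b : ZMod 2, a + 1 = b ↔ a ≠ b := by decide
    simp only [jointIndex_mk_ite]
    simp only [hbip.parity_of_adj h, hflip]
    by_cases hu : parity X u = k.1 <;> simp [hu]

theorem IsBipartition.copyHom_apply (hbip : G.IsBipartition X Y) (k : ZMod 2 × Fin (m + 3))
    (u : α) : hbip.copyHom k u = (u, if parity X u = k.1 then k.2 else k.2 + 1) :=
  rfl

theorem IsBipartition.range_copyHom (hbip : G.IsBipartition X Y) (k : ZMod 2 × Fin (m + 3)) :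
    Set.range (hbip.copyHom k) = jointIndex X ⁻¹' {k, k + 1} := by
  ext p
  constructor
  · rintro ⟨u, rfl⟩
    rw [Set.mem_preimage, copyHom_apply, jointIndex_mk_ite]
    split_ifs <;> simp
  · intro hp
    simp only [Set.mem_preimage, Set.mem_insert_iff, Set.mem_singleton_iff, jointIndex,
      Prod.ext_iff] at hp
    refine ⟨p.1, Prod.ext rfl ?_⟩
    rcases hp with ⟨h1, h2⟩ | ⟨h1, h2⟩ <;> simp_all [copyHom_apply]

theorem IsBipartition.copyHom_fst (hbip : G.IsBipartition X Y) {k : ZMod 2 × Fin (m + 3)}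
    {p : α × Fin (m + 3)} (hp : jointIndex X p = k ∨ jointIndex X p = k + 1) :
    hbip.copyHom k p.1 = p := by
  obtain ⟨u, hu⟩ : p ∈ Set.range (hbip.copyHom k) := by rw [hbip.range_copyHom]; exact hp
  rw [← hu]
  rfl

theorem IsBipartition.ncard_preimage_copyHom [Finite α] (hbip : G.IsBipartition X Y)
    (S : Set (α × Fin (m + 3))) (k : ZMod 2 × Fin (m + 3)) :
    (hbip.copyHom k ⁻¹' S).ncard =
      (S ∩ jointIndex X ⁻¹' {k}).ncard + (S ∩ jointIndex X ⁻¹' {k + 1}).ncard := by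
  have hinj : Function.Injective (hbip.copyHom k) := fun _ _ h => congrArg Prod.fst h
  rw [← Finset.sum_pair (f := fun j => (S ∩ jointIndex X ⁻¹' {j}).ncard) (by simp),
    ← Set.ncard_inter_preimage_eq_sum, Finset.coe_pair,
    ← range_copyHom, ← Set.preimage_inter_range,
    Set.ncard_preimage_of_injective_subset_range hinj Set.inter_subset_right]

theorem IsBipartition.sum_ncard_preimage_copyHom [Finite α] (hbip : G.IsBipartition X Y)
    (S : Set (α × Fin (m + 3))) :
    ∑ k, (hbip.copyHom k ⁻¹' S).ncard = 2 * S.ncard := by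
  have hsum := Set.ncard_inter_preimage_eq_sum (jointIndex X) S Finset.univ
  rw [Finset.coe_univ, Set.preimage_univ, Set.inter_univ] at hsum
  simp only [hbip.ncard_preimage_copyHom, Finset.sum_add_distrib]
  rw [Fintype.sum_equiv (Equiv.addRight 1) (fun k => (S ∩ jointIndex X ⁻¹' {k + 1}).ncard)
    (fun k => (S ∩ jointIndex X ⁻¹' {k}).ncard) fun _ => rfl, ← hsum, two_mul]

theorem IsBipartition.exists_ncard_preimage_copyHom_lt [Finite α] (hbip : G.IsBipartition X Y)
    {S : Set (α × Fin (m + 3))} (hS : S.ncard ≤ 2 * G.minDeg)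
    (hk : 2 * G.minDeg < (m + 3) * G.vConn) :
    ∃ k, (hbip.copyHom k ⁻¹' S).ncard < G.vConn := by
  by_contra! h
  have hle := Finset.card_nsmul_le_sum Finset.univ _ _ fun k _ => h k
  rw [hbip.sum_ncard_preimage_copyHom, Finset.card_univ, Fintype.card_prod, ZMod.card,
    Fintype.card_fin, smul_eq_mul, mul_assoc] at hle
  omega

variable {S : Set (α × Fin (m + 3))} {x : ↥Sᶜ}

abbrev jointsMet (G : SimpleGraph α) (X : Set α) (S : Set (α × Fin (m + 3))) (x : ↥Sᶜ) :
    Set (ZMod 2 × Fin (m + 3)) :=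
  jointIndex X '' (G.tensorProd (cycleGraph (m + 3))).componentOutside S x

theorem IsBipartition.minDeg_le_ncard_inter_joint [Finite α] (hbip : G.IsBipartition X Y)
    {q : α × Fin (m + 3)} (hq : q ∈ (G.tensorProd (cycleGraph (m + 3))).componentOutside S x)
    {k : ZMod 2 × Fin (m + 3)} (hk : k = jointIndex X q + 1 ∨ k = jointIndex X q - 1)
    (hmiss : k ∉ G.jointsMet X S x) :
    G.minDeg ≤ (S ∩ jointIndex X ⁻¹' {k}).ncard := by
  have hsub : (fun v => (v, k.2)) '' G.neighborSet q.1 ⊆ S ∩ jointIndex X ⁻¹' {k} := by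
    rintro _ ⟨v, hv, rfl⟩
    obtain ⟨hadj, hjoint⟩ := hbip.adj_and_jointIndex_eq hv hk
    refine ⟨by_contra fun hS => hmiss ?_, hjoint⟩
    exact ⟨_, mem_componentOutside_of_adj hq hS hadj, hjoint⟩
  calc G.minDeg ≤ (G.neighborSet q.1).ncard := minDeg_le_ncard_neighborSet _
    _ = ((fun v => (v, k.2)) '' G.neighborSet q.1).ncard :=
      (Set.ncard_image_of_injective _ fun _ _ h => congrArg Prod.fst h).symm
    _ ≤ _ := Set.ncard_le_ncard hsub

theorem IsBipartition.eq_neighborSet_of_notMem [Finite α] (hbip : G.IsBipartition X Y)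
    (hS : S.ncard ≤ 2 * G.minDeg) {q : α × Fin (m + 3)}
    (hq : q ∈ (G.tensorProd (cycleGraph (m + 3))).componentOutside S x)
    (hup : jointIndex X q + 1 ∉ G.jointsMet X S x)
    (hdown : jointIndex X q - 1 ∉ G.jointsMet X S x) :
    S = (G.tensorProd (cycleGraph (m + 3))).neighborSet q := by
  have hsub : (G.tensorProd (cycleGraph (m + 3))).neighborSet q ⊆ S := fun r hr =>
    by_contra fun hrS => (hbip.tensorProd_cycleGraph_adj_iff.1 hr).2.elim
      (fun h => hup ⟨r, mem_componentOutside_of_adj hq hrS hr, h⟩)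
      (fun h => hdown ⟨r, mem_componentOutside_of_adj hq hrS hr, h⟩)
  refine (Set.eq_of_subset_of_ncard_le hsub ?_).symm
  rw [ncard_neighborSet_tensorProd_cycleGraph]
  exact hS.trans (Nat.mul_le_mul_left 2 (minDeg_le_ncard_neighborSet _))

theorem IsBipartition.mem_componentOutside_of_ncard_lt (hbip : G.IsBipartition X Y)
    {k : ZMod 2 × Fin (m + 3)} (hk : (hbip.copyHom k ⁻¹' S).ncard < G.vConn)
    {p r : α × Fin (m + 3)} (hp : p ∈ (G.tensorProd (cycleGraph (m + 3))).componentOutside S x)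
    (hpk : jointIndex X p = k ∨ jointIndex X p = k + 1)
    (hrk : jointIndex X r = k ∨ jointIndex X r = k + 1) (hr : r ∉ S) :
    r ∈ (G.tensorProd (cycleGraph (m + 3))).componentOutside S x := by
  rw [← hbip.copyHom_fst hrk] at hr ⊢
  exact (hbip.copyHom k).mem_componentOutside hk (by rwa [hbip.copyHom_fst hpk]) hr

theorem IsBipartition.sub_one_notMem_of_boundary [Finite α] (hbip : G.IsBipartition X Y)
    (hX : G.minDeg + 1 ≤ X.ncard) (hY : G.minDeg + 1 ≤ Y.ncard) (hδ : 1 ≤ G.minDeg)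
    (hκ : 0 < G.vConn) (hS : S.ncard ≤ 2 * G.minDeg) {q : α × Fin (m + 3)}
    (hq : q ∈ (G.tensorProd (cycleGraph (m + 3))).componentOutside S x)
    (hup : jointIndex X q + 1 ∉ G.jointsMet X S x)
    {b : ZMod 2 × Fin (m + 3)}
    (hbL : b ∉ G.jointsMet X S x)
    (hbq : b ≠ jointIndex X q + 1) (hb : G.minDeg ≤ (S ∩ jointIndex X ⁻¹' {b}).ncard) :
    jointIndex X q - 1 ∉ G.jointsMet X S x := by
  set c := jointIndex X q
  rintro ⟨p, hpD, hp⟩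
  have hbc : b ≠ c := fun h => hbL ⟨q, hq, h.symm⟩
  have hbc' : b ≠ c - 1 := fun h => hbL ⟨p, hpD, hp.trans h.symm⟩
  have hcount :
      (S ∩ jointIndex X ⁻¹' {b}).ncard + (S ∩ jointIndex X ⁻¹' {c + 1}).ncard +
        ((S ∩ jointIndex X ⁻¹' {c - 1}).ncard + (S ∩ jointIndex X ⁻¹' {c}).ncard) ≤
      S.ncard := by
    have hle := Set.ncard_le_ncard (Set.inter_subset_left :
      S ∩ jointIndex X ⁻¹' ↑({b, c + 1, c - 1, c} : Finset _) ⊆ S)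
    rwa [Set.ncard_inter_preimage_eq_sum, Finset.sum_insert (by simp [hbq, hbc, hbc']),
      Finset.sum_insert (by simp [add_one_ne_sub_one]), Finset.sum_pair (by simp),
      ← add_assoc] at hle
  have hc1 : G.minDeg ≤ (S ∩ jointIndex X ⁻¹' {c + 1}).ncard :=
    hbip.minDeg_le_ncard_inter_joint hq (Or.inl rfl) hup
  have hcopy : (hbip.copyHom (c - 1) ⁻¹' S).ncard < G.vConn := by
    rw [hbip.ncard_preimage_copyHom, sub_add_cancel]
    omega
  have hc : (S ∩ jointIndex X ⁻¹' {c}).ncard = 0 := by omega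
  have hfill : ∀ r, jointIndex X r = c →
      r ∈ (G.tensorProd (cycleGraph (m + 3))).componentOutside S x := fun r hr =>
    hbip.mem_componentOutside_of_ncard_lt hcopy hpD (Or.inl hp)
      (Or.inr (by rw [hr, sub_add_cancel])) fun h =>
        ((Set.ncard_pos (Set.toFinite (S ∩ jointIndex X ⁻¹' {c}))).2 ⟨r, h, hr⟩).ne' hc
  obtain ⟨z, hz, hzS⟩ : ∃ z, jointIndex X z = c + 1 ∧ z ∉ S := by
    by_contra! h
    have hle : (jointIndex X ⁻¹' {c + 1}).ncard ≤ (S ∩ jointIndex X ⁻¹' {c + 1}).ncard :=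
      Set.ncard_le_ncard fun z hz => ⟨h z hz, hz⟩
    have := hbip.minDeg_lt_ncard_joint hX hY (c + 1)
    omega
  obtain ⟨v, hv⟩ : (G.neighborSet z.1).Nonempty :=
    Set.nonempty_of_ncard_ne_zero (by have := minDeg_le_ncard_neighborSet (G := G) z.1; omega)
  obtain ⟨hadj, hw⟩ := hbip.adj_and_jointIndex_eq hv (k := c)
    (Or.inr (by rw [hz, add_sub_cancel_right]))
  exact hup ⟨z, mem_componentOutside_of_adj (hfill _ hw) hzS hadj.symm, hz⟩

theorem IsBipartition.exists_eq_neighborSet_of_forall_notMem [Finite α]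
    (hbip : G.IsBipartition X Y) (hodd : Odd (m + 3)) (hX : G.minDeg + 1 ≤ X.ncard)
    (hY : G.minDeg + 1 ≤ Y.ncard) (hδ : 1 ≤ G.minDeg) (hκ : 0 < G.vConn)
    (hS : S.ncard ≤ 2 * G.minDeg) {k₀ : ZMod 2 × Fin (m + 3)}
    (hk₀ : ∀ u,
      hbip.copyHom k₀ u ∉ (G.tensorProd (cycleGraph (m + 3))).componentOutside S x) :
    ∃ q, S = (G.tensorProd (cycleGraph (m + 3))).neighborSet q := by
  have hcyc := natCast_surjective_zmod_two_prod_fin hodd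
  have hmiss : ∀ k, k = k₀ ∨ k = k₀ + 1 → k ∉ G.jointsMet X S x := by
    rintro _ hk ⟨p, hpD, rfl⟩
    exact hk₀ p.1 (by rwa [hbip.copyHom_fst hk])
  -- `b` and `b - 1` are not met but `b + 1` is; `c` ends the run of met joints from `b + 1`.
  obtain ⟨b, hb, hb1, hb2⟩ := exists_mem_add_one_notMem hcyc (L := (G.jointsMet X S x)ᶜ)
    (hmiss _ (Or.inr rfl)) (Set.compl_ne_univ.2 ⟨_, x, mem_componentOutside_self, rfl⟩)
  rw [Set.mem_compl_iff, not_not] at hb1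
  obtain ⟨c, ⟨q, hq, rfl⟩, hc1, hc2⟩ :=
    exists_mem_add_one_notMem hcyc hb1 fun h => hmiss k₀ (Or.inl rfl) (h ▸ Set.mem_univ _)
  rcases hc2 with hc | hc
  · exact ⟨q, hbip.eq_neighborSet_of_notMem hS hq hc1 (by rwa [hc, add_sub_cancel_right])⟩
  obtain ⟨qb, hqb, hqbj⟩ := hb1
  refine absurd hc (hbip.sub_one_notMem_of_boundary hX hY hδ hκ hS hq hc1 hb ?_
    (hbip.minDeg_le_ncard_inter_joint hqb (Or.inr (by rw [hqbj, add_sub_cancel_right])) hb))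
  rintro rfl
  rw [add_sub_cancel_right] at hb2
  rcases hb2 with h | h
  · exact hmiss _ (Or.inl (add_right_cancel h)) ⟨q, hq, rfl⟩
  · exact h ⟨q, hq, rfl⟩

end Bipartite

end SimpleGraph

/-- For a connected bipartite graph G with |X|,|Y| ≥ δ(G)+1, odd n ≥ 3 and
κ(G) > (2/n)·δ(G), the graph G × Cₙ is super connected. -/
theorem stmt_11 (G : SimpleGraph α) (X Y : Set α)
    (hGc : G.Connected) (hbip : G.IsBipartition X Y)
    (n : ℕ) (hn : 3 ≤ n) (hodd : Odd n)
    (hX : G.minDeg + 1 ≤ X.ncard) (hY : G.minDeg + 1 ≤ Y.ncard)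
    (hk : 2 * G.minDeg < n * G.vConn) :
    (G.tensorProd (cycleGraph n)).SuperConnected := by
  obtain ⟨m, rfl⟩ : ∃ m, n = m + 3 := ⟨n - 3, by omega⟩
  have := hbip.finite (by omega) (by omega)
  have := hbip.nontrivial (Set.nonempty_of_ncard_ne_zero (by omega))
    (Set.nonempty_of_ncard_ne_zero (by omega))
  have hδ := hGc.one_le_minDeg
  have hκ : 0 < G.vConn := Nat.pos_of_ne_zero fun h => by simp [h] at hk
  rintro S ⟨hcut, hcard⟩
  have hS : S.ncard ≤ 2 * G.minDeg := hcard.trans_le (vConn_tensorProd_cycleGraph_le G)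
  suffices ∃ q, S = (G.tensorProd (cycleGraph (m + 3))).neighborSet q by
    obtain ⟨q, rfl⟩ := this
    refine ⟨q, le_antisymm ?_ (minDeg_le_ncard_neighborSet q), rfl⟩
    rw [minDeg_tensorProd_cycleGraph]
    exact hS
  obtain ⟨x, y, hxy⟩ :=
    hcut.exists_not_reachable (hS.trans_lt (hbip.two_mul_minDeg_lt_card hX hY))
  by_contra hno
  have hmeets : ∀ (z : ↥Sᶜ) k,
      ∃ u, hbip.copyHom k u ∈ (G.tensorProd (cycleGraph (m + 3))).componentOutside S z := by
    by_contra! h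
    obtain ⟨z, k, hk⟩ := h
    exact hno (hbip.exists_eq_neighborSet_of_forall_notMem hodd hX hY hδ hκ hS hk)
  obtain ⟨k, hk⟩ := hbip.exists_ncard_preimage_copyHom_lt hS hk
  obtain ⟨u, hu⟩ := hmeets x k
  obtain ⟨v, hv⟩ := hmeets y k
  exact hxy (reachable_of_mem_componentOutside
    ((hbip.copyHom k).mem_componentOutside hk hu hv.1) hv)
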